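/- arXiv:2305.11260 — 2 statements merged into one kernel-verified Lean document; each statement's English description precedes it below -/
import Mathlib

section
/- Let (Ω, μ) be a probability space, let (E_t)_{t∈ℕ} be a sequence of measurable sets in Ω, let γ ∈ (0,1), δ ∈ (0,1], and T ∈ ℕ. Set ε := δ·(1 − γ^T·(1 − γ)). If the discounted constraint-satisfaction probabilities satisfy ∑_{t=0}^∞ γ^t · μ(E_t) ≥ (1 − δ + ε)/(1 − γ), then μ(⋂_{t=0}^T E_t) ≥ 1 − δ; that is, the solution is (1 − δ)-constrained up to horizon T. -/
open MeasureTheory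

/-! The hypothesis says exactly that the discounted violation probability
`∑ γ^t (1 - μ(E_t))` is at most `δ γ^T`. As `γ^t ≥ γ^T` for `t ≤ T`, the violation
probabilities up to the horizon sum to at most `δ`, and the union bound concludes. -/

section Discounting

variable {γ : ℝ}

lemma summable_pow_mul_of_abs_le_one (hγ0 : 0 ≤ γ) (hγ1 : γ < 1) {f : ℕ → ℝ}
    (hf : ∀ t, |f t| ≤ 1) : Summable fun t => γ ^ t * f t :=
  (summable_geometric_of_lt_one hγ0 hγ1).of_norm_bounded fun t => by
    rw [Real.norm_eq_abs, abs_mul, abs_of_nonneg (pow_nonneg hγ0 t)]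
    exact mul_le_of_le_one_right (pow_nonneg hγ0 t) (hf t)

lemma tsum_pow_mul_one_sub (hγ0 : 0 ≤ γ) (hγ1 : γ < 1) {p : ℕ → ℝ}
    (hp : Summable fun t => γ ^ t * p t) :
    ∑' t, γ ^ t * (1 - p t) = (1 - γ)⁻¹ - ∑' t, γ ^ t * p t := by
  simp only [mul_one_sub]
  rw [(summable_geometric_of_lt_one hγ0 hγ1).tsum_sub hp, tsum_geometric_of_lt_one hγ0 hγ1]

lemma pow_mul_sum_range_le_tsum_pow_mul (hγ0 : 0 ≤ γ) (hγ1 : γ ≤ 1) {q : ℕ → ℝ}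
    (hq : ∀ t, 0 ≤ q t) (hs : Summable fun t => γ ^ t * q t) (T : ℕ) :
    γ ^ T * ∑ t ∈ Finset.range (T + 1), q t ≤ ∑' t, γ ^ t * q t :=
  calc γ ^ T * ∑ t ∈ Finset.range (T + 1), q t
      ≤ ∑ t ∈ Finset.range (T + 1), γ ^ t * q t := by
        rw [Finset.mul_sum]
        refine Finset.sum_le_sum fun t ht => mul_le_mul_of_nonneg_right ?_ (hq t)
        exact pow_le_pow_of_le_one hγ0 hγ1 (Finset.mem_range_succ_iff.mp ht)
    _ ≤ ∑' t, γ ^ t * q t :=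
        hs.sum_le_tsum _ fun t _ => mul_nonneg (pow_nonneg hγ0 t) (hq t)

end Discounting

lemma one_sub_sum_le_probReal_biInter {Ω ι : Type*} [MeasurableSpace Ω] {μ : Measure Ω}
    [IsProbabilityMeasure μ] {E : ι → Set Ω} (hE : ∀ i, MeasurableSet (E i)) (s : Finset ι) :
    1 - ∑ i ∈ s, (1 - μ.real (E i)) ≤ μ.real (⋂ i ∈ s, E i) := by
  have hunion := measureReal_biUnion_finset_le (μ := μ) s fun i => (E i)ᶜ
  have hmeas : MeasurableSet (⋂ i ∈ s, E i) := s.measurableSet_biInter fun i _ => hE i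
  rw [← Set.compl_iInter₂, probReal_compl_eq_one_sub hmeas] at hunion
  simp only [probReal_compl_eq_one_sub (hE _)] at hunion
  linarith

theorem stmt0_general {Ω : Type*} [MeasurableSpace Ω] (μ : Measure Ω) [IsProbabilityMeasure μ]
    (E : ℕ → Set Ω) (hE : ∀ t, MeasurableSet (E t))
    (γ δ : ℝ) (hγ : γ ∈ Set.Ioo (0 : ℝ) 1) (T : ℕ)
    (ε : ℝ) (hε : ε = δ * (1 - γ ^ T * (1 - γ)))
    (hsum : (∑' t : ℕ, γ ^ t * (μ (E t)).toReal) ≥ (1 - δ + ε) / (1 - γ)) :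
    (μ (⋂ t ∈ Finset.range (T + 1), E t)).toReal ≥ 1 - δ := by
  obtain ⟨hγ0, hγ1⟩ := hγ
  have hp : ∀ t, 0 ≤ μ.real (E t) ∧ μ.real (E t) ≤ 1 := fun t =>
    ⟨measureReal_nonneg, measureReal_le_one⟩
  have hsp : Summable fun t => γ ^ t * μ.real (E t) :=
    summable_pow_mul_of_abs_le_one hγ0.le hγ1 fun t => abs_le.2 ⟨by linarith [hp t], (hp t).2⟩
  have hsq : Summable fun t => γ ^ t * (1 - μ.real (E t)) :=
    summable_pow_mul_of_abs_le_one hγ0.le hγ1 fun t =>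
      abs_le.2 ⟨by linarith [hp t], by linarith [hp t]⟩
  have hviolation : ∑' t, γ ^ t * (1 - μ.real (E t)) ≤ δ * γ ^ T := by
    have hC : (1 - δ + ε) / (1 - γ) = (1 - γ)⁻¹ - δ * γ ^ T := by
      rw [hε]; field_simp [(sub_pos.2 hγ1).ne']; ring
    rw [tsum_pow_mul_one_sub hγ0.le hγ1 hsp]
    have hsum' : (1 - γ)⁻¹ - δ * γ ^ T ≤ ∑' t, γ ^ t * μ.real (E t) := hC ▸ hsum
    linarith
  have hfinite : ∑ t ∈ Finset.range (T + 1), (1 - μ.real (E t)) ≤ δ :=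
    le_of_mul_le_mul_left
      ((pow_mul_sum_range_le_tsum_pow_mul hγ0.le hγ1.le (fun t => by linarith [hp t]) hsq T).trans
        (by linarith))
      (pow_pos hγ0 T)
  have hunion := one_sub_sum_le_probReal_biInter (μ := μ) hE (Finset.range (T + 1))
  change μ.real _ ≥ 1 - δ
  linarith

/-- Theorem 5 (constraint guarantees): if the discounted constraint-satisfaction
probabilities are lower bounded by `(1 - δ + ε)/(1 - γ)` with
`ε = δ·(1 − γ^T·(1 − γ))`, then the solution is `(1 − δ)`-constrained up to
horizon `T`. -/
theorem stmt0 {Ω : Type*} [MeasurableSpace Ω] (μ : Measure Ω) [IsProbabilityMeasure μ]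
    (E : ℕ → Set Ω) (hE : ∀ t, MeasurableSet (E t))
    (γ δ : ℝ) (hγ : γ ∈ Set.Ioo (0 : ℝ) 1) (hδ : δ ∈ Set.Ioc (0 : ℝ) 1) (T : ℕ)
    (ε : ℝ) (hε : ε = δ * (1 - γ ^ T * (1 - γ)))
    (hsum : (∑' t : ℕ, γ ^ t * (μ (E t)).toReal) ≥ (1 - δ + ε) / (1 - γ)) :
    (μ (⋂ t ∈ Finset.range (T + 1), E t)).toReal ≥ 1 - δ :=
  stmt0_general μ E hE γ δ hγ T ε hε hsum
end

section
/- Let γ : [0, T] → ℝ² be a K-Lipschitz curve (so that ‖γ(t) − γ(s)‖ ≤ K·|t − s|) and let r ≥ 0. Then the Lebesgue measure (area) of the closed r-neighborhood of the image of γ, i.e., of {x ∈ ℝ² : dist(x, γ([0,T])) ≤ r}, is at most 2·r·K·T + π·r². -/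
/-!
Cover the neighbourhood by the balls of radius `ρ = r + K T / n` around the `n + 1` points
`γ(i T / n)`. Consecutive centres are at distance `h ≤ K T / n`, and each new ball adds at most
the lune `B(c_{i+1}, ρ) \ B(c_i, ρ)`, which has area at most `2 ρ h`: every line parallel to
`c_{i+1} - c_i` meets it in an interval of length at most `h`, and only lines at distance at most
`ρ` from `c_i` meet it. Hence the area is at most `π ρ² + 2 ρ K T`, and `n → ∞` gives the
claim.
-/

open MeasureTheory Metric Set Filter
open scoped ENNReal NNReal Topology

lemma volume_setOf_sq_le_and_lt_sub_sq_le (c : ℝ) {d : ℝ} (hd : 0 ≤ d) :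
    volume {s : ℝ | s ^ 2 ≤ c ∧ c < (s - d) ^ 2} ≤ ENNReal.ofReal d := by
  calc volume {s : ℝ | s ^ 2 ≤ c ∧ c < (s - d) ^ 2}
      ≤ volume (Ico (-√c) (d - √c)) := by
        refine measure_mono fun s ⟨hsc, hsd⟩ ↦ ?_
        have hs := abs_le.mp (Real.abs_le_sqrt hsc)
        have hc : 0 ≤ c := (sq_nonneg s).trans hsc
        refine ⟨hs.1, lt_of_not_ge fun h ↦ hsd.not_ge ?_⟩
        rw [← Real.sq_sqrt hc]
        nlinarith
    _ = ENNReal.ofReal d := by rw [Real.volume_Ico]; ring_nf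

lemma volume_lune_prod_le {R : ℝ} (hR : 0 ≤ R) {d : ℝ} (hd : 0 ≤ d) :
    volume {q : ℝ × ℝ | q.1 ^ 2 + q.2 ^ 2 ≤ R ^ 2 ∧ R ^ 2 < q.1 ^ 2 + (q.2 - d) ^ 2} ≤
      ENNReal.ofReal (2 * R * d) := by
  set A := {q : ℝ × ℝ | q.1 ^ 2 + q.2 ^ 2 ≤ R ^ 2 ∧ R ^ 2 < q.1 ^ 2 + (q.2 - d) ^ 2}
  have hA : MeasurableSet A := by measurability
  have hslice (w : ℝ) :
      volume (Prod.mk w ⁻¹' A) ≤ (Icc (-R) R).indicator (fun _ ↦ ENNReal.ofReal d) w := by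
    by_cases hw : w ∈ Icc (-R) R
    · rw [indicator_of_mem hw]
      convert volume_setOf_sq_le_and_lt_sub_sq_le (R ^ 2 - w ^ 2) hd using 2
      ext s
      simp only [A, mem_preimage, mem_ofPred_eq]
      constructor <;> rintro ⟨h1, h2⟩ <;> constructor <;> linarith
    · rw [indicator_of_notMem hw, nonpos_iff_eq_zero, measure_eq_zero_iff_ae_notMem]
      refine ae_of_all _ fun s ⟨hs, _⟩ ↦ hw ?_
      exact abs_le_of_sq_le_sq' (by nlinarith [sq_nonneg s]) hR
  calc volume A = ∫⁻ w, volume (Prod.mk w ⁻¹' A) := by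
        rw [Measure.volume_eq_prod, Measure.prod_apply hA]
    _ ≤ ∫⁻ w, (Icc (-R) R).indicator (fun _ ↦ ENNReal.ofReal d) w := lintegral_mono hslice
    _ = ENNReal.ofReal (2 * R * d) := by
        rw [lintegral_indicator_const measurableSet_Icc, Real.volume_Icc,
          ← ENNReal.ofReal_mul hd]
        ring_nf

lemma volume_closedBall_zero_diff_closedBall_single_le {R : ℝ} (hR : 0 ≤ R) {d : ℝ}
    (hd : 0 ≤ d) :
    volume (closedBall (0 : EuclideanSpace ℝ (Fin 2)) R \ closedBall (EuclideanSpace.single 1 d) R)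
      ≤ ENNReal.ofReal (2 * R * d) := by
  have hΨ : MeasurePreserving (fun p : EuclideanSpace ℝ (Fin 2) ↦ (p 0, p 1)) :=
    (volume_preserving_finTwoArrow ℝ).comp (PiLp.volume_preserving_ofLp (Fin 2))
  have hdist (p c : EuclideanSpace ℝ (Fin 2)) :
      dist p c ^ 2 = (p 0 - c 0) ^ 2 + (p 1 - c 1) ^ 2 := by
    rw [EuclideanSpace.dist_eq, Real.sq_sqrt (by positivity), Fin.sum_univ_two, Real.dist_eq,
      Real.dist_eq, sq_abs, sq_abs]
  have hset : closedBall (0 : EuclideanSpace ℝ (Fin 2)) R \ closedBall (EuclideanSpace.single 1 d) R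
      = (fun p : EuclideanSpace ℝ (Fin 2) ↦ (p 0, p 1)) ⁻¹'
        {q : ℝ × ℝ | q.1 ^ 2 + q.2 ^ 2 ≤ R ^ 2 ∧ R ^ 2 < q.1 ^ 2 + (q.2 - d) ^ 2} := by
    ext p
    simp only [Set.mem_sdiff, mem_closedBall, mem_preimage, mem_ofPred_eq, not_le]
    rw [← pow_le_pow_iff_left₀ dist_nonneg hR two_ne_zero,
      ← pow_lt_pow_iff_left₀ hR dist_nonneg two_ne_zero, hdist, hdist]
    simp
  rw [hset, hΨ.measure_preimage (by measurability)]
  exact volume_lune_prod_le hR hd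

lemma volume_closedBall_diff_closedBall_le (x y : EuclideanSpace ℝ (Fin 2)) {R : ℝ}
    (hR : 0 ≤ R) :
    volume (closedBall x R \ closedBall y R) ≤ ENNReal.ofReal (2 * R * dist x y) := by
  set w : EuclideanSpace ℝ (Fin 2) := EuclideanSpace.single 1 (dist x y)
  set e := (ℝ ∙ (y - x - w))ᗮ.reflection
  have hew : e (y - x) = w := Submodule.reflection_sub (by simp [w, dist_eq_norm'])
  have hΦ : MeasurePreserving (fun p ↦ e (p - x)) :=
    e.measurePreserving.comp (measurePreserving_sub_right volume x)
  have h0 (p) : dist (e (p - x)) 0 = dist p x := by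
    rw [dist_zero_right, e.norm_map, dist_eq_norm]
  have hw (p) : dist (e (p - x)) w = dist p y := by
    rw [← hew, dist_eq_norm, ← map_sub, e.norm_map, sub_sub_sub_cancel_right, dist_eq_norm]
  have hset : closedBall x R \ closedBall y R =
      (fun p ↦ e (p - x)) ⁻¹' (closedBall 0 R \ closedBall w R) := by
    ext p
    simp only [Set.mem_sdiff, mem_closedBall, mem_preimage, h0, hw]
  rw [hset, hΦ.measure_preimage (by measurability)]
  exact volume_closedBall_zero_diff_closedBall_single_le hR dist_nonneg

lemma measure_biUnion_range_succ_le {α : Type*} [MeasurableSpace α] (μ : Measure α)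
    (B : ℕ → Set α) (n : ℕ) :
    μ (⋃ i ∈ Finset.range (n + 1), B i) ≤
      μ (B 0) + ∑ i ∈ Finset.range n, μ (B (i + 1) \ B i) := by
  induction n with
  | zero => simp
  | succ n ih =>
    calc μ (⋃ i ∈ Finset.range (n + 2), B i)
        ≤ μ ((⋃ i ∈ Finset.range (n + 1), B i) ∪ (B (n + 1) \ B n)) := by
          refine measure_mono fun x hx ↦ ?_
          simp only [Finset.mem_range, mem_iUnion, exists_prop, mem_union, Set.mem_sdiff] at hx ⊢
          obtain ⟨i, hi, hxi⟩ := hx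
          by_cases hin : i = n + 1
          · subst hin
            by_cases hxn : x ∈ B n
            · exact .inl ⟨n, by omega, hxn⟩
            · exact .inr ⟨hxi, hxn⟩
          · exact .inl ⟨i, by omega, hxi⟩
      _ ≤ μ (⋃ i ∈ Finset.range (n + 1), B i) + μ (B (n + 1) \ B n) := measure_union_le _ _
      _ ≤ μ (B 0) + ∑ i ∈ Finset.range (n + 1), μ (B (i + 1) \ B i) := by
          rw [Finset.sum_range_succ, ← add_assoc]
          gcongr

lemma volume_biUnion_closedBall_le (c : ℕ → EuclideanSpace ℝ (Fin 2)) {ρ : ℝ} (hρ : 0 ≤ ρ)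
    (n : ℕ) :
    volume (⋃ i ∈ Finset.range (n + 1), closedBall (c i) ρ) ≤
      ENNReal.ofReal (Real.pi * ρ ^ 2 + 2 * ρ * ∑ i ∈ Finset.range n, dist (c (i + 1)) (c i)) := by
  calc volume (⋃ i ∈ Finset.range (n + 1), closedBall (c i) ρ)
      ≤ volume (closedBall (c 0) ρ) +
          ∑ i ∈ Finset.range n, volume (closedBall (c (i + 1)) ρ \ closedBall (c i) ρ) :=
        measure_biUnion_range_succ_le _ _ n
    _ ≤ ENNReal.ofReal (Real.pi * ρ ^ 2) +
          ∑ i ∈ Finset.range n, ENNReal.ofReal (2 * ρ * dist (c (i + 1)) (c i)) := by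
        gcongr with i
        · rw [EuclideanSpace.volume_closedBall_fin_two, ← ENNReal.ofReal_pow hρ,
            ← ENNReal.ofReal_mul (by positivity), mul_comm]
        · exact volume_closedBall_diff_closedBall_le _ _ hρ
    _ = _ := by
        rw [← ENNReal.ofReal_sum_of_nonneg fun i _ ↦ by positivity, Finset.mul_sum,
          ENNReal.ofReal_add (by positivity) (Finset.sum_nonneg fun i _ ↦ by positivity)]

lemma natCast_mul_div_mem_Icc {T : ℝ} (hT : 0 ≤ T) {i n : ℕ} (hi : i ≤ n) :
    (i : ℝ) * (T / n) ∈ Icc 0 T := by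
  refine ⟨by positivity, ?_⟩
  rcases n.eq_zero_or_pos with rfl | hn
  · simp_all
  · rw [mul_div, div_le_iff₀ (by positivity)]
    exact mul_comm T n ▸ mul_le_mul_of_nonneg_right (by exact_mod_cast hi) hT

lemma exists_natCast_mul_div_dist_le {t T : ℝ} (ht : t ∈ Icc 0 T) {n : ℕ} (hn : n ≠ 0) :
    ∃ i ≤ n, dist t (i * (T / n)) ≤ T / n := by
  have hn' : (0 : ℝ) < n := by positivity
  rcases (ht.1.trans ht.2).eq_or_lt with rfl | hT
  · exact ⟨0, n.zero_le, by simp [le_antisymm ht.2 ht.1]⟩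
  have hδ : 0 < T / n := by positivity
  refine ⟨⌊t / (T / n)⌋₊, Nat.floor_le_of_le ?_, ?_⟩
  · rw [div_le_iff₀ hδ, mul_div_cancel₀ _ hn'.ne']
    exact ht.2
  · have h1 := Nat.floor_le (div_nonneg ht.1 hδ.le)
    have h2 := Nat.lt_floor_add_one (t / (T / n))
    rw [le_div_iff₀ hδ] at h1
    rw [div_lt_iff₀ hδ] at h2
    rw [Real.dist_eq, abs_le]
    constructor <;> nlinarith

lemma cthickening_image_Icc_subset_biUnion_closedBall {E : Type*} [PseudoMetricSpace E]
    {f : ℝ → E} {K : ℝ≥0} {T : ℝ} (hf : LipschitzOnWith K f (Icc 0 T)) {r : ℝ} (hr : 0 ≤ r)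
    {n : ℕ} (hn : n ≠ 0) :
    cthickening r (f '' Icc 0 T) ⊆
      ⋃ i ∈ Finset.range (n + 1), closedBall (f (i * (T / n))) (r + K * (T / n)) := by
  rw [(isCompact_Icc.image_of_continuousOn hf.continuousOn).cthickening_eq_biUnion_closedBall hr]
  refine iUnion₂_subset ?_
  rintro _ ⟨t, ht, rfl⟩
  obtain ⟨i, hi, hti⟩ := exists_natCast_mul_div_dist_le ht hn
  have hT : 0 ≤ T := ht.1.trans ht.2
  refine fun x hx ↦ mem_iUnion₂.2
    ⟨i, Finset.mem_range.2 (Nat.lt_succ_of_le hi), closedBall_subset_closedBall' ?_ hx⟩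
  calc r + dist (f t) (f (i * (T / n))) ≤ r + K * dist t (i * (T / n)) := by
        gcongr; exact hf.dist_le_mul _ ht _ (natCast_mul_div_mem_Icc hT hi)
    _ ≤ r + K * (T / n) := by gcongr

lemma volume_cthickening_image_Icc_le {f : ℝ → EuclideanSpace ℝ (Fin 2)} {K : ℝ≥0} {T : ℝ}
    (hT : 0 ≤ T) (hf : LipschitzOnWith K f (Icc 0 T)) {r : ℝ} (hr : 0 ≤ r) {n : ℕ} (hn : n ≠ 0) :
    volume (cthickening r (f '' Icc 0 T)) ≤
      ENNReal.ofReal (Real.pi * (r + K * (T / n)) ^ 2 + 2 * (r + K * (T / n)) * (K * T)) := by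
  set c : ℕ → EuclideanSpace ℝ (Fin 2) := fun i ↦ f (i * (T / n))
  have hstep {i : ℕ} (hi : i < n) : dist (c (i + 1)) (c i) ≤ K * (T / n) := by
    calc dist (c (i + 1)) (c i) ≤ K * dist (((i + 1 : ℕ) : ℝ) * (T / n)) (i * (T / n)) :=
          hf.dist_le_mul _ (natCast_mul_div_mem_Icc hT hi) _ (natCast_mul_div_mem_Icc hT hi.le)
      _ = K * (T / n) := by
          rw [Real.dist_eq, Nat.cast_succ, ← sub_mul, add_sub_cancel_left, one_mul,
            abs_of_nonneg (by positivity)]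
  have hlength : ∑ i ∈ Finset.range n, dist (c (i + 1)) (c i) ≤ K * T := by
    calc ∑ i ∈ Finset.range n, dist (c (i + 1)) (c i) ≤ ∑ i ∈ Finset.range n, K * (T / n) :=
          Finset.sum_le_sum fun i hi ↦ hstep (Finset.mem_range.1 hi)
      _ = K * T := by
          rw [Finset.sum_const, Finset.card_range, nsmul_eq_mul]
          field_simp
  calc volume (cthickening r (f '' Icc 0 T))
      ≤ volume (⋃ i ∈ Finset.range (n + 1), closedBall (c i) (r + K * (T / n))) :=
        measure_mono (cthickening_image_Icc_subset_biUnion_closedBall hf hr hn)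
    _ ≤ _ := volume_biUnion_closedBall_le c (by positivity) n
    _ ≤ _ := by gcongr

/-- The closed `r`-neighborhood of the image of a `K`-Lipschitz curve
`γ : [0,T] → ℝ²` has area at most `2·r·K·T + π·r²`. -/
theorem stmt8 (T : ℝ) (hT : 0 ≤ T) (K : ℝ) (hK : 0 ≤ K)
    (f : ℝ → EuclideanSpace ℝ (Fin 2))
    (hf : ∀ s ∈ Set.Icc (0 : ℝ) T, ∀ t ∈ Set.Icc (0 : ℝ) T, ‖f t - f s‖ ≤ K * |t - s|)
    (r : ℝ) (hr : 0 ≤ r) :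
    volume (Metric.cthickening r (f '' Set.Icc (0 : ℝ) T)) ≤
      ENNReal.ofReal (2 * r * K * T + Real.pi * r ^ 2) := by
  have hK' : (K.toNNReal : ℝ) = K := Real.coe_toNNReal K hK
  have hlip : LipschitzOnWith K.toNNReal f (Icc 0 T) :=
    LipschitzOnWith.of_dist_le_mul fun t ht s hs ↦ by
      rw [dist_eq_norm, Real.dist_eq, hK']
      exact hf s hs t ht
  have hmesh : Tendsto (fun n : ℕ ↦ K * (T / n)) atTop (𝓝 0) := by
    simpa using (tendsto_const_div_atTop_nhds_zero_nat T).const_mul K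
  have hbound : Continuous fun h : ℝ ↦
      ENNReal.ofReal (Real.pi * (r + h) ^ 2 + 2 * (r + h) * (K * T)) :=
    ENNReal.continuous_ofReal.comp (by fun_prop)
  refine (ge_of_tendsto ((hbound.tendsto 0).comp hmesh) ?_).trans_eq ?_
  · filter_upwards [eventually_ne_atTop 0] with n hn
    simpa only [hK', Function.comp_apply] using volume_cthickening_image_Icc_le hT hlip hr hn
  · congr 1
    ring
end
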